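/- arXiv:1904.04658 — 2 statements merged into one kernel-verified Lean document; each statement's English description precedes it below -/
import Mathlib

section
/- If a connected graph G has the ({f_n}, r)-retaining property for some reach r ≥ 1, then G has the ({f_n}, 1)-retaining property. -/
/-- The growth comparison relation: `f ≼ g` iff there is `C > 0` with
`f n ≤ C * g (C*n + C) + C` for all `n`. -/
def GrowthLE (f g : ℕ → ℕ) : Prop :=
  ∃ C : ℕ, 0 < C ∧ ∀ n, f n ≤ C * g (C * n + C) + C

/-- Equivalence of growth rates. -/
def GrowthEquiv (f g : ℕ → ℕ) : Prop := GrowthLE f g ∧ GrowthLE g f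

/-- The growth function of a subset `U` of a metric space, with basepoint set `A`:
`n ↦ #(U ∩ B(A, n))`. -/
noncomputable def relGrowth {X : Type*} [MetricSpace X] (U A : Set X) : ℕ → ℕ :=
  fun n => Set.ncard {x | x ∈ U ∧ ∃ a ∈ A, dist a x ≤ (n : ℝ)}

/-- A metric space is discrete and proper iff all balls (of integer radius) are finite. -/
def DiscreteProper (X : Type*) [MetricSpace X] : Prop :=
  ∀ (x : X) (n : ℕ), {y : X | dist x y ≤ (n : ℝ)}.Finite

/-- Uniformly proper: there is a uniform bound on cardinalities of all balls of radius `n`. -/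
def UniformlyProper (X : Type*) [MetricSpace X] : Prop :=
  ∃ g : ℕ → ℕ, ∀ (x : X) (n : ℕ),
    {y : X | dist x y ≤ (n : ℝ)}.Finite ∧ Set.ncard {y : X | dist x y ≤ (n : ℝ)} ≤ g n

/-- A `c`-quasi-isometry between metric spaces. -/
def IsQuasiIsometryMS {X Y : Type*} [MetricSpace X] [MetricSpace Y] (c : ℝ) (φ : X → Y) : Prop :=
  1 ≤ c ∧
  (∀ a b : X, dist a b / c - c ≤ dist (φ a) (φ b) ∧ dist (φ a) (φ b) ≤ c * dist a b + c) ∧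
  (∀ y : Y, ∃ x : X, dist (φ x) y ≤ c)

/-- Growth function of `U ⊆ V(G)` (with the metric induced by the path-metric of `G`)
with respect to basepoint set `A`. -/
noncomputable def graphGrowth {V : Type*} (G : SimpleGraph V) (U A : Set V) : ℕ → ℕ :=
  fun n => Set.ncard {v | v ∈ U ∧ ∃ a ∈ A, G.dist a v ≤ n}

/-- `Growth(U) = Growth(G)` for `U` a set of vertices of `G` with the induced metric. -/
def GrowthEqFull {V : Type*} (G : SimpleGraph V) (U : Set V) : Prop :=
  ∃ u₀ ∈ U, GrowthEquiv (graphGrowth G Set.univ {u₀}) (graphGrowth G U {u₀})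

/-- The set of vertices protected up to (and including) time `n`. -/
def protectedUpTo {V : Type*} (W : ℕ → Set V) (n : ℕ) : Set V :=
  ⋃ i ∈ Finset.Icc 1 n, W i

/-- The set of vertices on fire at time `n`, for fire reach `r`, strategy `W` and
initial fire `X0`: `X (n+1)` consists of vertices joined to `X n` by a path of length
at most `r` avoiding `(W 1 ∪ ⋯ ∪ W (n+1)) \ X n`. -/
def fireSet {V : Type*} (G : SimpleGraph V) (r : ℕ) (W : ℕ → Set V) (X0 : Set V) : ℕ → Set V
  | 0 => X0
  | n + 1 =>
    {v | ∃ u ∈ fireSet G r W X0 n, ∃ p : G.Walk u v, p.length ≤ r ∧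
      ∀ x ∈ p.support, x ∉ protectedUpTo W (n + 1) \ fireSet G r W X0 n}

/-- The set of vertices on fire at the end of the game. -/
def burnedSet {V : Type*} (G : SimpleGraph V) (r : ℕ) (W : ℕ → Set V) (X0 : Set V) : Set V :=
  ⋃ n, fireSet G r W X0 n

/-- An `{f n}`-strategy: at each time `n ≥ 1` at most `f n` vertices are protected. -/
def IsStrategyBound {V : Type*} (f : ℕ → ℕ) (W : ℕ → Set V) : Prop :=
  ∀ n, 1 ≤ n → (W n).Finite ∧ (W n).ncard ≤ f n

/-- A finite-step strategy protects no vertices after some finite time. -/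
def FiniteStepStrategy {V : Type*} (W : ℕ → Set V) : Prop :=
  ∃ N, ∀ n, N ≤ n → W n = ∅

/-- A retaining `({f n}, r)`-strategy for the initial fire `X0`. -/
def IsRetainingStrategy {V : Type*} (G : SimpleGraph V) (f : ℕ → ℕ) (r : ℕ)
    (X0 : Set V) (W : ℕ → Set V) : Prop :=
  IsStrategyBound f W ∧ GrowthEqFull G (burnedSet G r W X0)ᶜ

/-- The `({f n}, r)`-retaining property. -/
def RetainingProperty {V : Type*} (G : SimpleGraph V) (f : ℕ → ℕ) (r : ℕ) : Prop :=
  ∀ X0 : Set V, X0.Finite → ∃ W, IsRetainingStrategy G f r X0 W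

/-- Polynomial retaining property of degree `d` (fire reach one). -/
def PolyRetaining {V : Type*} (G : SimpleGraph V) (d : ℕ) : Prop :=
  ∃ K : ℕ, 0 < K ∧ RetainingProperty G (fun n => K * n ^ d) 1

/-- The finite-step `{f n}`-retaining property (fire reach one). -/
def FiniteStepRetainingProperty {V : Type*} (G : SimpleGraph V) (f : ℕ → ℕ) : Prop :=
  ∀ X0 : Set V, X0.Finite → ∃ W, IsRetainingStrategy G f 1 X0 W ∧ FiniteStepStrategy W

/-- The finite-step polynomial retaining property of degree `d`. -/
def FiniteStepPolyRetaining {V : Type*} (G : SimpleGraph V) (d : ℕ) : Prop :=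
  ∃ K : ℕ, 0 < K ∧ FiniteStepRetainingProperty G (fun n => K * n ^ d)

/-- The `({f n}, r)`-containment property. -/
def ContainmentProperty {V : Type*} (G : SimpleGraph V) (f : ℕ → ℕ) (r : ℕ) : Prop :=
  ∀ X0 : Set V, X0.Finite →
    ∃ W, IsStrategyBound f W ∧ (burnedSet G r W X0).Finite

/-- Polynomial containment property of degree `d` (fire reach one). -/
def PolyContainment {V : Type*} (G : SimpleGraph V) (d : ℕ) : Prop :=
  ∃ K : ℕ, 0 < K ∧ ContainmentProperty G (fun n => K * n ^ d) 1

/-- The constant containment property. -/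
def ConstantContainment {V : Type*} (G : SimpleGraph V) : Prop := PolyContainment G 0

/-- `D` is (the vertex set of) a connected component of `G \ K`. -/
def ComponentAvoiding {V : Type*} (G : SimpleGraph V) (K D : Set V) : Prop :=
  D.Nonempty ∧ D ⊆ Kᶜ ∧
  (∀ u ∈ D, ∀ v ∈ D, ∃ p : G.Walk u v, ∀ x ∈ p.support, x ∉ K) ∧
  (∀ u ∈ D, ∀ v : V, v ∉ K → (∃ p : G.Walk u v, ∀ x ∈ p.support, x ∉ K) → v ∈ D)

/-- A deep component of `G \ K`: not contained in any bounded neighborhood of `K`. -/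
def IsDeepComponent {V : Type*} (G : SimpleGraph V) (K D : Set V) : Prop :=
  ComponentAvoiding G K D ∧ ∀ r : ℕ, ¬ D ⊆ {v | ∃ k ∈ K, G.dist k v ≤ r}

/-- An unbounded component of `G \ K`. -/
def IsUnboundedComponent {V : Type*} (G : SimpleGraph V) (K D : Set V) : Prop :=
  ComponentAvoiding G K D ∧ ∀ (v : V) (r : ℕ), ¬ D ⊆ {u | G.dist v u ≤ r}

/-- Uniformly locally finite graph: vertex degrees are bounded. -/
def UnifLocFinite {V : Type*} (G : SimpleGraph V) : Prop :=
  ∃ M : ℕ, ∀ v : V, (G.neighborSet v).Finite ∧ (G.neighborSet v).ncard ≤ M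

/-- Locally finite graph. -/
def LocFinite {V : Type*} (G : SimpleGraph V) : Prop := ∀ v : V, (G.neighborSet v).Finite

/-- A `c`-quasi-isometry between two connected graphs (with their path-metrics). -/
def GraphQI {V V' : Type*} (c : ℝ) (G : SimpleGraph V) (H : SimpleGraph V') (φ : V → V') : Prop :=
  1 ≤ c ∧
  (∀ a b : V, (G.dist a b : ℝ) / c - c ≤ (H.dist (φ a) (φ b) : ℝ) ∧
    (H.dist (φ a) (φ b) : ℝ) ≤ c * (G.dist a b : ℝ) + c) ∧
  (∀ y : V', ∃ x : V, (H.dist (φ x) y : ℝ) ≤ c)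

/-- The Cayley graph of a group with respect to a set `S`. -/
def cayley (G : Type) [Group G] (S : Set G) : SimpleGraph G :=
  SimpleGraph.fromRel (fun a b => a⁻¹ * b ∈ S)

/-- `S` is a finite generating set. -/
def IsFiniteGenSet {G : Type} [Group G] (S : Set G) : Prop :=
  S.Finite ∧ Subgroup.closure S = ⊤

/-- The ball of radius `n` around the identity for the word metric w.r.t. `T`. -/
def wordBall {G : Type} [Group G] (T : Set G) (n : ℕ) : Set G :=
  {g | ∃ l : List G, (∀ x ∈ l, x ∈ T ∨ x⁻¹ ∈ T) ∧ l.length ≤ n ∧ l.prod = g}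

/-- The word metric w.r.t. `T`. -/
noncomputable def wordDist {G : Type} [Group G] (T : Set G) (x y : G) : ℕ :=
  sInf {n | x⁻¹ * y ∈ wordBall T n}

/-- `G` is an amalgamated product `A ∗_C B` with `C` a proper subgroup of both factors,
where `C` corresponds to the given subgroup. -/
def SplitsOverAmalgam (G : Type) [Group G] (C : Subgroup G) : Prop :=
  ∃ (Gi : Bool → Type) (_ : ∀ i, Group (Gi i)) (K : Type) (_ : Group K)
    (φ : ∀ i, K →* Gi i),
    (∀ i, Function.Injective (φ i)) ∧ (∀ i, ¬ Function.Surjective (φ i)) ∧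
    ∃ e : G ≃* Monoid.PushoutI φ,
      C = Subgroup.comap e.toMonoidHom (Monoid.PushoutI.base φ).range

/-- `G` is an HNN-extension over the given subgroup `C`. -/
def SplitsOverHNN (G : Type) [Group G] (C : Subgroup G) : Prop :=
  ∃ (H : Type) (_ : Group H) (A B : Subgroup H) (φ : A ≃* B)
    (e : G ≃* HNNExtension H A B φ),
    C = Subgroup.comap e.toMonoidHom
      (Subgroup.map (HNNExtension.of : H →* HNNExtension H A B φ) A)

/-- `G` splits over `C`: amalgamated product with `C` proper in both factors,
or HNN-extension over `C`. -/
def SplitsOver (G : Type) [Group G] (C : Subgroup G) : Prop :=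
  SplitsOverAmalgam G C ∨ SplitsOverHNN G C

/-- Amenability of a (discrete) group: existence of a left-invariant, finitely
additive probability measure defined on all subsets. -/
def IsAmenable (G : Type) [Group G] : Prop :=
  ∃ m : Set G → ℝ, (∀ A : Set G, 0 ≤ m A) ∧ m Set.univ = 1 ∧
    (∀ A B : Set G, Disjoint A B → m (A ∪ B) = m A + m B) ∧
    (∀ (g : G) (A : Set G), m ((g * ·) '' A) = m A)

section FirefighterAux

open SimpleGraph

variable {V : Type*} {G : SimpleGraph V} {r : ℕ} {W : ℕ → Set V} {X0 : Set V}

lemma fireSet_succ_intro {n : ℕ} {u v : V} (hu : u ∈ fireSet G r W X0 n) (p : G.Walk u v)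
    (hlen : p.length ≤ r)
    (hcond : ∀ x ∈ p.support, x ∉ protectedUpTo W (n + 1) \ fireSet G r W X0 n) :
    v ∈ fireSet G r W X0 (n + 1) := ⟨u, hu, p, hlen, hcond⟩

lemma fireSet_succ_elim {n : ℕ} {v : V} (hv : v ∈ fireSet G r W X0 (n + 1)) :
    ∃ u ∈ fireSet G r W X0 n, ∃ p : G.Walk u v, p.length ≤ r ∧
      ∀ x ∈ p.support, x ∉ protectedUpTo W (n + 1) \ fireSet G r W X0 n := hv

lemma mem_protectedUpTo_iff {x : V} {m : ℕ} :
    x ∈ protectedUpTo W m ↔ ∃ i, 1 ≤ i ∧ i ≤ m ∧ x ∈ W i := by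
  simp only [protectedUpTo, Set.mem_iUnion, Finset.mem_Icc, exists_prop]
  constructor
  · rintro ⟨i, ⟨h1, h2⟩, h3⟩; exact ⟨i, h1, h2, h3⟩
  · rintro ⟨i, h1, h2, h3⟩; exact ⟨i, ⟨h1, h2⟩, h3⟩

lemma fireSet_subset_succ {n : ℕ} : fireSet G r W X0 n ⊆ fireSet G r W X0 (n + 1) := by
  intro v hv
  refine fireSet_succ_intro hv Walk.nil (by simp) ?_
  intro x hx
  simp only [Walk.support_nil, List.mem_singleton] at hx
  subst hx
  exact fun hmem => hmem.2 hv

lemma fireSet_mono {m n : ℕ} (h : m ≤ n) : fireSet G r W X0 m ⊆ fireSet G r W X0 n := by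
  induction h with
  | refl => exact subset_rfl
  | step h ih => exact ih.trans fireSet_subset_succ

lemma fireSet_one_subset (hr : 1 ≤ r) : ∀ n, fireSet G 1 W X0 n ⊆ fireSet G r W X0 n := by
  intro n
  induction n with
  | zero => exact subset_rfl
  | succ n ih =>
    intro v hv
    obtain ⟨u, hu, p, hlen, hcond⟩ := fireSet_succ_elim hv
    refine fireSet_succ_intro (ih hu) p (hlen.trans hr) ?_
    intro x hx hmem
    exact hcond x hx ⟨hmem.1, fun h1 => hmem.2 (ih h1)⟩

lemma walk_getVert_mem_support {u v : V} (p : G.Walk u v) (i : ℕ) :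
    p.getVert i ∈ p.support := by
  induction p generalizing i with
  | nil => simp [Walk.getVert]
  | cons h q ih =>
    cases i with
    | zero => simp
    | succ i =>
      simp only [Walk.getVert_cons_succ, Walk.support_cons, List.mem_cons]
      exact Or.inr (ih i)

lemma burn_along_walk (hr : 1 ≤ r) {x0 v : V} (hx0 : x0 ∈ X0) (p : G.Walk x0 v)
    (h : ∀ x ∈ p.support, ∀ m, m ≤ p.length → x ∈ protectedUpTo W m →
      x ∈ fireSet G r W X0 (m - 1)) :
    v ∈ fireSet G r W X0 p.length := by
  have key : ∀ i, i ≤ p.length → p.getVert i ∈ fireSet G r W X0 i := by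
    intro i
    induction i with
    | zero => intro _; simp only [Walk.getVert_zero]; exact hx0
    | succ i ih =>
      intro hi
      have hi' : i < p.length := hi
      have hadj := p.adj_getVert_succ hi'
      refine fireSet_succ_intro (ih hi'.le) (Walk.cons hadj Walk.nil) (by simpa using hr) ?_
      intro x hx
      simp only [Walk.support_cons, Walk.support_nil, List.mem_cons,
        List.mem_singleton, List.not_mem_nil, or_false] at hx
      rcases hx with rfl | rfl
      · exact fun hmem => hmem.2 (ih hi'.le)
      · intro hmem
        have := h _ (walk_getVert_mem_support p (i + 1)) (i + 1) hi hmem.1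
        simp only [Nat.add_sub_cancel] at this
        exact hmem.2 this
  have := key p.length le_rfl
  simpa using this

lemma protected_never_burns {k : ℕ} {w : V} (hk : 1 ≤ k) (hw : w ∈ W k)
    (hnb : w ∉ fireSet G r W X0 (k - 1)) : ∀ n, w ∉ fireSet G r W X0 n := by
  intro n
  induction n using Nat.strong_induction_on with
  | _ n ih =>
    rcases le_or_gt n (k - 1) with hle | hlt
    · exact fun hn => hnb (fireSet_mono hle hn)
    · cases n with
      | zero => exact absurd hlt (Nat.not_lt_zero _)
      | succ m =>
        intro hmem
        obtain ⟨u, hu, p, hlen, hcond⟩ := fireSet_succ_elim hmem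
        exact hcond w p.end_mem_support
          ⟨mem_protectedUpTo_iff.2 ⟨k, hk, by omega, hw⟩, ih m (Nat.lt_succ_self m)⟩

lemma fireSet_one_dist (hG : G.Connected) {n : ℕ} {v : V} (hv : v ∈ fireSet G 1 W X0 n) :
    ∃ x0 ∈ X0, G.dist x0 v ≤ n := by
  induction n generalizing v with
  | zero => exact ⟨v, hv, by simp⟩
  | succ n ih =>
    obtain ⟨u, hu, p, hlen, -⟩ := fireSet_succ_elim hv
    obtain ⟨x0, hx0, hd⟩ := ih hu
    refine ⟨x0, hx0, ?_⟩
    have h1 : G.dist x0 v ≤ G.dist x0 u + G.dist u v := hG.dist_triangle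
    have h2 : G.dist u v ≤ p.length := SimpleGraph.dist_le p
    omega

/-- Vertices all of whose connecting walks from `X0` pass through `w`. -/
def NRset {V : Type*} (G : SimpleGraph V) (X0 : Set V) (w : V) : Set V :=
  {v | ∀ x0 ∈ X0, ∀ p : G.Walk x0 v, w ∈ p.support}

lemma nr_not_burned {k0 : ℕ} {w0 : V} (hk1 : 1 ≤ k0) (hw0 : w0 ∈ W k0)
    (hnb : w0 ∉ fireSet G r W X0 (k0 - 1)) :
    ∀ n v, v ∈ fireSet G r W X0 n → v ∉ NRset G X0 w0 := by
  classical
  have hw0n : ∀ n, w0 ∉ fireSet G r W X0 n := protected_never_burns hk1 hw0 hnb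
  have hw0X0 : w0 ∉ X0 := fun hx => hw0n 0 hx
  intro n
  induction n using Nat.strong_induction_on with
  | _ n ih =>
    intro v hv hNR
    cases n with
    | zero =>
      have := hNR v hv Walk.nil
      simp only [Walk.support_nil, List.mem_singleton] at this
      subst this
      exact hw0X0 hv
    | succ m =>
      obtain ⟨u, hu, p, hlen, hcond⟩ := fireSet_succ_elim hv
      by_cases hmem : w0 ∈ p.support
      · have : w0 ∈ fireSet G r W X0 (m + 1) := by
          refine fireSet_succ_intro hu (p.takeUntil w0 hmem)
            (le_trans (Walk.length_takeUntil_le p hmem) hlen) ?_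
          intro x hx
          exact hcond x (Walk.support_takeUntil_subset p hmem hx)
        exact hw0n _ this
      · have hu' := ih m (Nat.lt_succ_self m) u hu
        simp only [NRset, Set.mem_setOf_eq] at hu' hNR
        push_neg at hu'
        obtain ⟨x0, hx0, q, hq⟩ := hu'
        have := hNR x0 hx0 (q.append p)
        rw [Walk.mem_support_append_iff] at this
        rcases this with hsup | hsup
        · exact hq hsup
        · exact hmem hsup

end FirefighterAux

theorem stmt8 {V : Type*} (G : SimpleGraph V) (hG : G.Connected)
    (f : ℕ → ℕ) (r : ℕ) (hr : 1 ≤ r)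
    (h : RetainingProperty G f r) : RetainingProperty G f 1 := by
  classical
  intro X0 hX0
  obtain ⟨W, hWb, hWg⟩ := h X0 hX0
  obtain ⟨u₀, hu₀, hfU, hUf⟩ := hWg
  -- burned sets comparison
  have hburn : burnedSet G 1 W X0 ⊆ burnedSet G r W X0 := by
    intro v hv
    simp only [burnedSet, Set.mem_iUnion] at hv ⊢
    obtain ⟨n, hn⟩ := hv
    exact ⟨n, fireSet_one_subset hr n hn⟩
  have hUU' : (burnedSet G r W X0)ᶜ ⊆ (burnedSet G 1 W X0)ᶜ := Set.compl_subset_compl.2 hburn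
  have hgg : ∀ (S : Set V) (u : V) (n : ℕ),
      graphGrowth G S {u} n = (S ∩ {v | G.dist u v ≤ n}).ncard := by
    intro S u n
    unfold graphGrowth
    congr 1
    ext v
    simp only [Set.mem_setOf_eq, Set.mem_inter_iff, Set.mem_singleton_iff, exists_eq_left]
  by_cases hfin : ∀ m : ℕ, {v | G.dist u₀ v ≤ m}.Finite
  · -- Case A: all balls around u₀ are finite; reuse W
    refine ⟨W, hWb, u₀, hUU' hu₀, ?_, ?_⟩
    · -- full ≼ U'
      obtain ⟨C, hC, hCb⟩ := hfU
      refine ⟨C, hC, fun n => ?_⟩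
      have h1 := hCb n
      rw [hgg, hgg] at h1
      rw [hgg Set.univ, hgg]
      have h2 : ((burnedSet G r W X0)ᶜ ∩ {v | G.dist u₀ v ≤ C * n + C}).ncard ≤
          ((burnedSet G 1 W X0)ᶜ ∩ {v | G.dist u₀ v ≤ C * n + C}).ncard :=
        Set.ncard_le_ncard (Set.inter_subset_inter_left _ hUU')
          ((hfin _).subset Set.inter_subset_right)
      exact h1.trans (Nat.add_le_add_right (Nat.mul_le_mul_left C h2) C)
    · -- U' ≼ full
      refine ⟨1, one_pos, fun n => ?_⟩
      rw [hgg, hgg]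
      have h1 : ((burnedSet G 1 W X0)ᶜ ∩ {v | G.dist u₀ v ≤ n}).ncard ≤
          (Set.univ ∩ {v | G.dist u₀ v ≤ 1 * n + 1}).ncard := by
        refine Set.ncard_le_ncard ?_ ((hfin _).subset Set.inter_subset_right)
        intro v hv
        refine ⟨trivial, ?_⟩
        have := hv.2
        simp only [Set.mem_setOf_eq] at this ⊢
        omega
      omega
  · -- Case B: some ball around u₀ is infinite
    push_neg at hfin
    obtain ⟨n₁, hn₁⟩ := hfin
    have hn₁' : {v | G.dist u₀ v ≤ n₁}.Infinite := hn₁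
    have hballinf : ∀ (w : V) (n : ℕ), n₁ + G.dist w u₀ ≤ n →
        {v | G.dist w v ≤ n}.Infinite := by
      intro w n hn
      refine hn₁'.mono ?_
      intro v hv
      simp only [Set.mem_setOf_eq] at hv ⊢
      have h1 : G.dist w v ≤ G.dist w u₀ + G.dist u₀ v := hG.dist_triangle
      omega
    -- direction 1 is trivial for any basepoint and any target growth
    have hdir1 : ∀ (w : V) (g : ℕ → ℕ), GrowthLE (graphGrowth G Set.univ {w}) g := by
      intro w g
      refine ⟨(Finset.range (n₁ + G.dist w u₀ + 1)).sup (graphGrowth G Set.univ {w}) + 1,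
        Nat.succ_pos _, fun n => ?_⟩
      rcases lt_or_ge n (n₁ + G.dist w u₀ + 1) with hn | hn
      · have h1 := Finset.le_sup (f := graphGrowth G Set.univ {w}) (Finset.mem_range.2 hn)
        have h2 := Nat.le_add_left
          ((Finset.range (n₁ + G.dist w u₀ + 1)).sup (graphGrowth G Set.univ {w}) + 1)
          (((Finset.range (n₁ + G.dist w u₀ + 1)).sup (graphGrowth G Set.univ {w}) + 1) *
            g (((Finset.range (n₁ + G.dist w u₀ + 1)).sup (graphGrowth G Set.univ {w}) + 1) * n
              + ((Finset.range (n₁ + G.dist w u₀ + 1)).sup (graphGrowth G Set.univ {w}) + 1)))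
        omega
      · have h0 : graphGrowth G Set.univ {w} n = 0 := by
          rw [hgg, Set.univ_inter]
          exact (hballinf w n (by omega)).ncard
        omega
    by_cases hU'loc : ∀ n : ℕ, ((burnedSet G 1 W X0)ᶜ ∩ {v | G.dist u₀ v ≤ n}).Finite
    · -- Case B2 : survivors of the 1-game (w.r.t. W) are locally finite at u₀.
      -- Then the r-game survivors form a finite set; we build a one-vertex strategy.
      obtain ⟨C', hC', hC'b⟩ := hUf
      have hUb : ∀ n, n₁ ≤ n →
          ((burnedSet G r W X0)ᶜ ∩ {v | G.dist u₀ v ≤ n}).ncard ≤ C' := by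
        intro n hn
        have h1 := hC'b n
        rw [hgg, hgg, Set.univ_inter] at h1
        have h0 : ({v | G.dist u₀ v ≤ C' * n + C'}).ncard = 0 := by
          refine (hballinf u₀ _ ?_).ncard
          have : n ≤ C' * n := Nat.le_mul_of_pos_left n hC'
          simp only [SimpleGraph.dist_self]
          omega
        rw [h0] at h1
        omega
      have hUfin : ((burnedSet G r W X0)ᶜ).Finite := by
        by_contra hinf
        have hinf' : ((burnedSet G r W X0)ᶜ).Infinite := hinf
        obtain ⟨t, htU, htfin, htcard⟩ := hinf'.exists_subset_ncard_eq (C' + 1)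
        set N := max n₁ (htfin.toFinset.sup (fun x => G.dist u₀ x)) with hN
        have ht' : t ⊆ (burnedSet G r W X0)ᶜ ∩ {v | G.dist u₀ v ≤ N} := by
          intro x hx
          refine ⟨htU hx, ?_⟩
          simp only [Set.mem_setOf_eq]
          exact le_trans (Finset.le_sup (f := fun x => G.dist u₀ x) (htfin.mem_toFinset.2 hx))
            (le_max_right _ _)
        have hfinN : ((burnedSet G r W X0)ᶜ ∩ {v | G.dist u₀ v ≤ N}).Finite :=
          (hU'loc N).subset (Set.inter_subset_inter_left _ hUU')
        have h2 := Set.ncard_le_ncard ht' hfinN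
        have h3 := hUb N (le_max_left _ _)
        omega
      rcases Set.eq_empty_or_nonempty X0 with rfl | hne
      · -- X0 empty: contradicts case B + B2
        exfalso
        have hfire : ∀ n, fireSet G 1 W (∅ : Set V) n = ∅ := by
          intro n
          induction n with
          | zero => rfl
          | succ n ih =>
            ext v
            simp only [Set.mem_empty_iff_false, iff_false]
            intro hv
            obtain ⟨u, hu, -⟩ := fireSet_succ_elim hv
            rw [ih] at hu
            exact hu
        have hU'univ : (burnedSet G 1 W (∅ : Set V))ᶜ = Set.univ := by
          have : burnedSet G 1 W (∅ : Set V) = ∅ := by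
            simp only [burnedSet]
            simp [hfire]
          rw [this, Set.compl_empty]
        apply hn₁
        have := hU'loc n₁
        rwa [hU'univ, Set.univ_inter] at this
      -- there is an effective protection in the r-game
      have hexP : ∃ k, 1 ≤ k ∧ ∃ w, w ∈ W k ∧ w ∉ fireSet G r W X0 (k - 1) := by
        by_contra hno
        push_neg at hno
        have hall : burnedSet G r W X0 = Set.univ := by
          ext v
          simp only [Set.mem_univ, iff_true, burnedSet, Set.mem_iUnion]
          obtain ⟨x0, hx0⟩ := hne
          obtain ⟨p⟩ := hG.preconnected x0 v
          refine ⟨p.length, burn_along_walk hr hx0 p ?_⟩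
          intro x hx m hm hxp
          obtain ⟨i, hi1, him, hiW⟩ := mem_protectedUpTo_iff.1 hxp
          exact fireSet_mono (by omega) (hno i hi1 x hiW)
        rw [hall] at hu₀
        exact hu₀ trivial
      set k0 := Nat.find hexP with hk0def
      obtain ⟨hk1, w0, hw0W, hw0nb⟩ := Nat.find_spec hexP
      have hmin : ∀ j, j < k0 → ¬(1 ≤ j ∧ ∃ w, w ∈ W j ∧ w ∉ fireSet G r W X0 (j - 1)) :=
        fun j hj => Nat.find_min hexP hj
      have hdist : ∀ x0 ∈ X0, k0 ≤ G.dist x0 w0 := by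
        intro x0 hx0
        by_contra hlt
        push_neg at hlt
        obtain ⟨p, hp⟩ := (hG.preconnected x0 w0).exists_walk_length_eq_dist
        have hburnw0 : w0 ∈ fireSet G r W X0 p.length := by
          refine burn_along_walk hr hx0 p ?_
          intro x hx m hm hxp
          obtain ⟨i, hi1, him, hiW⟩ := mem_protectedUpTo_iff.1 hxp
          have hik : i < k0 := by omega
          have hmi := hmin i hik
          push_neg at hmi
          exact fireSet_mono (by omega) (hmi hi1 x hiW)
        exact hw0nb (fireSet_mono (by omega) hburnw0)
      set W1 : ℕ → Set V := fun n => if n = k0 then {w0} else ∅ with hW1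
      have hW1prot : ∀ m x, x ∈ protectedUpTo W1 m → x = w0 := by
        intro m x hx
        obtain ⟨i, hi1, him, hiW⟩ := mem_protectedUpTo_iff.1 hx
        by_cases hik : i = k0
        · rw [hW1] at hiW
          simp only [hik, if_pos rfl, Set.mem_singleton_iff] at hiW
          exact hiW
        · rw [hW1] at hiW
          simp only [if_neg hik] at hiW
          exact absurd hiW (Set.notMem_empty x)
      have hw0mem : w0 ∈ W1 k0 := by
        rw [hW1]; simp
      have hw0nb1 : ∀ n, w0 ∉ fireSet G 1 W1 X0 n := by
        refine protected_never_burns hk1 hw0mem ?_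
        intro hmem
        obtain ⟨x0, hx0, hd⟩ := fireSet_one_dist hG hmem
        have := hdist x0 hx0
        omega
      have hw0U' : w0 ∈ (burnedSet G 1 W1 X0)ᶜ := by
        simp only [burnedSet, Set.mem_compl_iff, Set.mem_iUnion, not_exists]
        exact hw0nb1
      have hNRU : NRset G X0 w0 ⊆ (burnedSet G r W X0)ᶜ := by
        intro v hv hb
        simp only [burnedSet, Set.mem_iUnion] at hb
        obtain ⟨n, hn⟩ := hb
        exact nr_not_burned hk1 hw0W hw0nb n v hn hv
      have hσsub : (burnedSet G 1 W1 X0)ᶜ ⊆ insert w0 (NRset G X0 w0) := by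
        intro v hv
        rcases eq_or_ne v w0 with rfl | hvw
        · exact Set.mem_insert _ _
        · refine Set.mem_insert_of_mem _ ?_
          by_contra hnr
          simp only [NRset, Set.mem_setOf_eq] at hnr
          push_neg at hnr
          obtain ⟨x0, hx0, p, hp⟩ := hnr
          apply hv
          simp only [burnedSet, Set.mem_iUnion]
          refine ⟨p.length, burn_along_walk le_rfl hx0 p ?_⟩
          intro x hx m hm hxp
          have hxw := hW1prot m x hxp
          subst hxw
          exact absurd hx hp
      have hσfin : ((burnedSet G 1 W1 X0)ᶜ).Finite :=
        Set.Finite.subset (hUfin.insert w0) (hσsub.trans (Set.insert_subset_insert hNRU))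
      refine ⟨W1, ?_, w0, hw0U', hdir1 w0 _, ?_⟩
      · -- strategy bound
        intro n hn
        rcases eq_or_ne n k0 with rfl | hnk
        · constructor
          · rw [hW1]; simp
          · have hb := hWb k0 hn
            have h1 : ({w0} : Set V).ncard ≤ (W k0).ncard :=
              Set.ncard_le_ncard (by simpa using hw0W) hb.1
            have hW1k : W1 k0 = {w0} := by rw [hW1]; simp
            rw [hW1k, Set.ncard_singleton]
            have h2 := hb.2
            simp only [Set.ncard_singleton] at h1
            omega
        · rw [hW1]
          simp [hnk]
      · -- σ-growth ≼ full
        refine ⟨((burnedSet G 1 W1 X0)ᶜ).ncard + 1, Nat.succ_pos _, fun n => ?_⟩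
        rw [hgg]
        have h1 : ((burnedSet G 1 W1 X0)ᶜ ∩ {v | G.dist w0 v ≤ n}).ncard ≤
            ((burnedSet G 1 W1 X0)ᶜ).ncard :=
          Set.ncard_le_ncard Set.inter_subset_left hσfin
        have h2 := Nat.le_add_left (((burnedSet G 1 W1 X0)ᶜ).ncard + 1)
          ((((burnedSet G 1 W1 X0)ᶜ).ncard + 1) *
            graphGrowth G Set.univ {w0} ((((burnedSet G 1 W1 X0)ᶜ).ncard + 1) * n +
              (((burnedSet G 1 W1 X0)ᶜ).ncard + 1)))
        omega
    · -- Case B1 : survivors of the 1-game have an infinite ball at u₀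
      push_neg at hU'loc
      obtain ⟨n₂, hn₂⟩ := hU'loc
      have hn₂' : ((burnedSet G 1 W X0)ᶜ ∩ {v | G.dist u₀ v ≤ n₂}).Infinite := hn₂
      refine ⟨W, hWb, u₀, hUU' hu₀, hdir1 u₀ _, ?_⟩
      refine ⟨(Finset.range n₂).sup (graphGrowth G (burnedSet G 1 W X0)ᶜ {u₀}) + 1,
        Nat.succ_pos _, fun n => ?_⟩
      rcases lt_or_ge n n₂ with hn | hn
      · have h1 := Finset.le_sup (f := graphGrowth G (burnedSet G 1 W X0)ᶜ {u₀})
          (Finset.mem_range.2 hn)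
        have h2 := Nat.le_add_left
          ((Finset.range n₂).sup (graphGrowth G (burnedSet G 1 W X0)ᶜ {u₀}) + 1)
          (((Finset.range n₂).sup (graphGrowth G (burnedSet G 1 W X0)ᶜ {u₀}) + 1) *
            graphGrowth G Set.univ {u₀}
              (((Finset.range n₂).sup (graphGrowth G (burnedSet G 1 W X0)ᶜ {u₀}) + 1) * n +
                ((Finset.range n₂).sup (graphGrowth G (burnedSet G 1 W X0)ᶜ {u₀}) + 1)))
        omega
      · have h0 : graphGrowth G (burnedSet G 1 W X0)ᶜ {u₀} n = 0 := by
          rw [hgg]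
          refine Set.Infinite.ncard ?_
          refine hn₂'.mono ?_
          intro v hv
          refine ⟨hv.1, ?_⟩
          have := hv.2
          simp only [Set.mem_setOf_eq] at this ⊢
          omega
        omega
end

section
/- Let G and H be uniformly locally finite connected graphs that are quasi-isometric. If G has the polynomial retaining property of degree d, then H has the polynomial retaining property of degree d. -/
/-!
Fix a quasi-isometry `φ : V → V'` with coarse inverse `ψ`. A fire in `H` started at `Y0` is
shadowed in `G` by the fire started at a neighbourhood of `ψ '' Y0`: one turn in `H` answers `L`
turns in `G`, protecting `R`-neighbourhoods of the images of the vertices `G` protects, which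
multiplies the polynomial budget by a constant. By induction on time, whenever `y` burns in `H`
a ball around `ψ y` has burned in `G`, so `φ` sends vertices saved in `G` to vertices saved in
`H`; bounded geometry lets `φ` and `ψ` compare the growth functions up to constants.
-/

open Set

lemma Set.ncard_biUnion_le_mul {α ι : Type*} {t : Set ι} (ht : t.Finite) {s : ι → Set α} {m : ℕ}
    (hs : ∀ i ∈ t, (s i).ncard ≤ m) : (⋃ i ∈ t, s i).ncard ≤ t.ncard * m := by
  classical
  have hunion : (⋃ i ∈ t, s i) = ⋃ i ∈ ht.toFinset, s i := by simp
  calc (⋃ i ∈ t, s i).ncard ≤ ∑ i ∈ ht.toFinset, (s i).ncard :=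
        hunion ▸ ht.toFinset.set_ncard_biUnion_le s
    _ ≤ ht.toFinset.card • m := Finset.sum_le_card_nsmul _ _ _ (by simpa using hs)
    _ = t.ncard * m := by rw [smul_eq_mul, ncard_eq_toFinset_card t ht]

lemma Set.ncard_le_mul_ncard_of_mapsTo {α β : Type*} {f : α → β} {s : Set α} {t : Set β}
    (hf : MapsTo f s t) (ht : t.Finite) {m : ℕ} (hfib : ∀ y ∈ t, {x | x ∈ s ∧ f x = y}.ncard ≤ m) :
    s.ncard ≤ m * t.ncard := by
  have hs : s = ⋃ y ∈ t, {x | x ∈ s ∧ f x = y} := by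
    ext x
    simpa using fun hx => hf hx
  rw [mul_comm, hs]
  exact ncard_biUnion_le_mul ht hfib

lemma SimpleGraph.Walk.dist_le_of_mem_support {V : Type*} {G : SimpleGraph V} {u v x : V}
    (p : G.Walk u v) (hx : x ∈ p.support) : G.dist u x ≤ p.length := by
  classical exact (SimpleGraph.dist_le _).trans (p.length_takeUntil_le_length hx)

def HasUniformBallBound {V : Type*} (G : SimpleGraph V) (b : ℕ → ℕ) : Prop :=
  ∀ (x : V) (n : ℕ), {y | G.dist x y ≤ n}.Finite ∧ {y | G.dist x y ≤ n}.ncard ≤ b n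

namespace SimpleGraph.Connected

variable {V : Type*} {G : SimpleGraph V}

lemma ball_succ_subset (hG : G.Connected) (x : V) (n : ℕ) :
    {y | G.dist x y ≤ n + 1} ⊆ insert x (⋃ v ∈ G.neighborSet x, {y | G.dist v y ≤ n}) := by
  intro y hy
  obtain ⟨p, hp⟩ := hG.exists_walk_length_eq_dist x y
  cases p with
  | nil => exact mem_insert _ _
  | @cons _ v _ hxv q =>
    refine mem_insert_of_mem _ (mem_biUnion hxv ?_)
    have : q.length + 1 ≤ n + 1 := by simpa [← hp] using hy
    exact (dist_le q).trans (by omega)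

lemma hasUniformBallBound (hG : G.Connected) {M : ℕ}
    (hM : ∀ v, (G.neighborSet v).Finite ∧ (G.neighborSet v).ncard ≤ M) :
    HasUniformBallBound G (fun n => (M + 1) ^ n) := by
  intro x n
  induction n generalizing x with
  | zero =>
    have hball : {y | G.dist x y ≤ 0} = {x} := by
      ext y
      simp [hG.dist_eq_zero_iff, eq_comm]
    rw [hball]
    simp
  | succ n ih =>
    have hsub := hG.ball_succ_subset x n
    have hfin : (insert x (⋃ v ∈ G.neighborSet x, {y | G.dist v y ≤ n})).Finite :=
      ((hM x).1.biUnion fun v _ => (ih v).1).insert x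
    refine ⟨hfin.subset hsub, (ncard_le_ncard hsub hfin).trans ?_⟩
    calc (insert x (⋃ v ∈ G.neighborSet x, {y | G.dist v y ≤ n})).ncard
        ≤ (G.neighborSet x).ncard * (M + 1) ^ n + 1 :=
          (ncard_insert_le _ _).trans
            (Nat.add_le_add_right (ncard_biUnion_le_mul (hM x).1 fun v _ => (ih v).2) 1)
      _ ≤ M * (M + 1) ^ n + (M + 1) ^ n :=
          Nat.add_le_add (Nat.mul_le_mul_right _ (hM x).2) (Nat.one_le_pow _ _ (Nat.succ_pos M))
      _ = (M + 1) ^ (n + 1) := by ring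

end SimpleGraph.Connected

lemma GrowthLE.of_le_mul {f g : ℕ → ℕ} (hg : Monotone g) (A : ℕ)
    (h : ∀ n, f n ≤ A * g (A * n + A)) : GrowthLE f g :=
  ⟨A + 1, A.succ_pos, fun n => calc
    f n ≤ A * g (A * n + A) := h n
    _ ≤ (A + 1) * g ((A + 1) * n + (A + 1)) + (A + 1) :=
      le_add_right (Nat.mul_le_mul (by omega) (hg (by nlinarith)))⟩

lemma GrowthLE.trans {f g h : ℕ → ℕ} (hfg : GrowthLE f g) (hgh : GrowthLE g h)
    (hh : Monotone h) : GrowthLE f h := by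
  obtain ⟨C₁, hC₁, hfg⟩ := hfg
  obtain ⟨C₂, hC₂, hgh⟩ := hgh
  refine ⟨C₁ * C₂ + C₁ + C₂, by positivity, fun n => ?_⟩
  calc f n ≤ C₁ * g (C₁ * n + C₁) + C₁ := hfg n
    _ ≤ C₁ * (C₂ * h (C₂ * (C₁ * n + C₁) + C₂) + C₂) + C₁ := by grw [hgh]
    _ ≤ C₁ * (C₂ * h ((C₁ * C₂ + C₁ + C₂) * n + (C₁ * C₂ + C₁ + C₂)) + C₂) + C₁ := by
      gcongr
      exact hh (by nlinarith)
    _ ≤ (C₁ * C₂ + C₁ + C₂) * h ((C₁ * C₂ + C₁ + C₂) * n + (C₁ * C₂ + C₁ + C₂)) +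
        (C₁ * C₂ + C₁ + C₂) := by nlinarith

section Growth

variable {V V' : Type*} {G : SimpleGraph V} {H : SimpleGraph V'}

lemma graphGrowth_singleton (U : Set V) (x₀ : V) (n : ℕ) :
    graphGrowth G U {x₀} n = {x | x ∈ U ∧ G.dist x₀ x ≤ n}.ncard := by
  simp [graphGrowth]

lemma graphGrowth_mono {b : ℕ → ℕ} (hb : HasUniformBallBound G b) (U : Set V) (x₀ : V) :
    Monotone (graphGrowth G U {x₀}) := by
  intro m n hmn
  simp only [graphGrowth_singleton]
  exact ncard_le_ncard (fun x hx => ⟨hx.1, hx.2.trans (by exact_mod_cast hmn)⟩)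
    ((hb x₀ n).1.subset fun x hx => hx.2)

lemma HasUniformBallBound.ncard_fiber_le {b : ℕ → ℕ} (hb : HasUniformBallBound G b) {r : ℕ}
    {f : V → V'} (hf : ∀ x x', f x = f x' → G.dist x x' ≤ r) (s : Set V) (y : V') :
    {x | x ∈ s ∧ f x = y}.ncard ≤ b r := by
  rcases eq_empty_or_nonempty {x | x ∈ s ∧ f x = y} with hempty | ⟨x₁, -, hx₁⟩
  · simp [hempty]
  · have hsub : {x | x ∈ s ∧ f x = y} ⊆ {x | G.dist x₁ x ≤ r} :=
      fun x hx => hf x₁ x (hx₁.trans hx.2.symm)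
    exact (ncard_le_ncard hsub (hb x₁ r).1).trans (hb x₁ r).2

lemma growthLE_graphGrowth_of_map {bG bH : ℕ → ℕ} (hbG : HasUniformBallBound G bG)
    (hbH : HasUniformBallBound H bH) {U : Set V} {U' : Set V'} {f : V → V'} (hf : MapsTo f U U')
    {x₀ : V} {y₀ : V'} {A : ℕ} (hdist : ∀ x, H.dist y₀ (f x) ≤ A * G.dist x₀ x + A) {r : ℕ}
    (hfib : ∀ x x', f x = f x' → G.dist x x' ≤ r) :
    GrowthLE (graphGrowth G U {x₀}) (graphGrowth H U' {y₀}) := by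
  refine .of_le_mul (graphGrowth_mono hbH U' y₀) (bG r + A) fun n => ?_
  have hmaps : MapsTo f {x | x ∈ U ∧ G.dist x₀ x ≤ n} {y | y ∈ U' ∧ H.dist y₀ y ≤ A * n + A} :=
    fun x hx => ⟨hf hx.1, (hdist x).trans (by gcongr; exact hx.2)⟩
  calc graphGrowth G U {x₀} n ≤ bG r * graphGrowth H U' {y₀} (A * n + A) := by
        simp only [graphGrowth_singleton]
        exact ncard_le_mul_ncard_of_mapsTo hmaps
          ((hbH y₀ _).1.subset fun y hy => hy.2) fun y _ => hbG.ncard_fiber_le hfib _ y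
    _ ≤ (bG r + A) * graphGrowth H U' {y₀} ((bG r + A) * n + (bG r + A)) := by
        gcongr
        · omega
        · exact graphGrowth_mono hbH U' y₀ (by nlinarith)

end Growth

structure IsNatQuasiIsometry {V V' : Type*} (G : SimpleGraph V) (H : SimpleGraph V')
    (φ : V → V') (ψ : V' → V) (C : ℕ) : Prop where
  dist_map_le : ∀ a b, H.dist (φ a) (φ b) ≤ C * G.dist a b + C
  dist_le_dist_map : ∀ a b, G.dist a b ≤ C * H.dist (φ a) (φ b) + C
  dist_map_inv_le : ∀ y, H.dist (φ (ψ y)) y ≤ C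

lemma GraphQI.exists_isNatQuasiIsometry {V V' : Type*} {G : SimpleGraph V} {H : SimpleGraph V'}
    {c : ℝ} {φ : V → V'} (hφ : GraphQI c G H φ) : ∃ ψ C, IsNatQuasiIsometry G H φ ψ C := by
  obtain ⟨hc, hdist, hdense⟩ := hφ
  choose ψ hψ using hdense
  -- `C = ⌈c²⌉` dominates both `c` and the additive constant `c²` of the lower bound.
  have hcC : c ^ 2 ≤ ⌈c ^ 2⌉₊ := Nat.le_ceil _
  have hcC' : c ≤ ⌈c ^ 2⌉₊ := le_trans (by nlinarith) hcC
  refine ⟨ψ, ⌈c ^ 2⌉₊, fun a b => ?_, fun a b => ?_, fun y => ?_⟩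
  · have := (hdist a b).2
    have : 0 ≤ (G.dist a b : ℝ) := Nat.cast_nonneg _
    exact_mod_cast (show (H.dist (φ a) (φ b) : ℝ) ≤ ⌈c ^ 2⌉₊ * G.dist a b + ⌈c ^ 2⌉₊ by nlinarith)
  · have := (div_le_iff₀ (by linarith)).mp (sub_le_iff_le_add.mp (hdist a b).1)
    have : 0 ≤ (H.dist (φ a) (φ b) : ℝ) := Nat.cast_nonneg _
    exact_mod_cast (show (G.dist a b : ℝ) ≤ ⌈c ^ 2⌉₊ * H.dist (φ a) (φ b) + ⌈c ^ 2⌉₊ by nlinarith)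
  · exact_mod_cast (hψ y).trans hcC'

namespace IsNatQuasiIsometry

variable {V V' : Type*} {G : SimpleGraph V} {H : SimpleGraph V'} {φ : V → V'} {ψ : V' → V}
  {C : ℕ}

lemma dist_inv_le (q : IsNatQuasiIsometry G H φ ψ C) (hH : H.Connected) (y y' : V') :
    G.dist (ψ y) (ψ y') ≤ C * H.dist y y' + (2 * C ^ 2 + C) := by
  have hy' : H.dist y' (φ (ψ y')) ≤ C := H.dist_comm ▸ q.dist_map_inv_le y'
  have hφψ : H.dist (φ (ψ y)) (φ (ψ y')) ≤ C + (H.dist y y' + C) :=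
    calc H.dist (φ (ψ y)) (φ (ψ y'))
        ≤ H.dist (φ (ψ y)) y + (H.dist y y' + H.dist y' (φ (ψ y'))) :=
          hH.dist_triangle.trans (Nat.add_le_add_left hH.dist_triangle _)
      _ ≤ C + (H.dist y y' + C) := by grw [q.dist_map_inv_le y, hy']
  calc G.dist (ψ y) (ψ y') ≤ C * H.dist (φ (ψ y)) (φ (ψ y')) + C := q.dist_le_dist_map _ _
    _ ≤ C * (C + (H.dist y y' + C)) + C := by grw [hφψ]
    _ = C * H.dist y y' + (2 * C ^ 2 + C) := by ring

lemma dist_inv_map_le (q : IsNatQuasiIsometry G H φ ψ C) (x : V) :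
    G.dist (ψ (φ x)) x ≤ C ^ 2 + C :=
  calc G.dist (ψ (φ x)) x ≤ C * H.dist (φ (ψ (φ x))) (φ x) + C := q.dist_le_dist_map _ _
    _ ≤ C * C + C := by grw [q.dist_map_inv_le]
    _ = C ^ 2 + C := by ring

lemma growthEqFull_of_mapsTo {bG bH : ℕ → ℕ} (q : IsNatQuasiIsometry G H φ ψ C) (hH : H.Connected)
    (hbG : HasUniformBallBound G bG) (hbH : HasUniformBallBound H bH) {U : Set V} {U' : Set V'}
    (hUU' : MapsTo φ U U') (hU : GrowthEqFull G U) : GrowthEqFull H U' := by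
  obtain ⟨u₀, hu₀, hfull, -⟩ := hU
  refine ⟨φ u₀, hUU' hu₀, ?_, ?_⟩
  · have hψ : GrowthLE (graphGrowth H univ {φ u₀}) (graphGrowth G univ {u₀}) := by
      refine growthLE_graphGrowth_of_map (A := C ^ 2 + C) (r := 2 * C) hbH hbG
        (mapsTo_univ ψ univ) (fun y => ?_) (fun y y' hyy' => ?_)
      · have hy : H.dist (φ (ψ y)) y ≤ C := q.dist_map_inv_le y
        rw [H.dist_comm] at hy
        calc G.dist u₀ (ψ y) ≤ C * H.dist (φ u₀) (φ (ψ y)) + C := q.dist_le_dist_map _ _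
          _ ≤ C * (H.dist (φ u₀) y + C) + C := by grw [hH.dist_triangle (v := y), hy]
          _ ≤ (C ^ 2 + C) * H.dist (φ u₀) y + (C ^ 2 + C) := by nlinarith
      · have hy : H.dist y (φ (ψ y)) ≤ C := H.dist_comm ▸ q.dist_map_inv_le y
        have hy' : H.dist (φ (ψ y)) y' ≤ C := hyy' ▸ q.dist_map_inv_le y'
        exact (hH.dist_triangle (v := φ (ψ y))).trans (by omega)
    have hφ : GrowthLE (graphGrowth G U {u₀}) (graphGrowth H U' {φ u₀}) :=
      growthLE_graphGrowth_of_map (r := C) hbG hbH hUU' (q.dist_map_le u₀) fun x x' hxx' => by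
        simpa [hxx'] using q.dist_le_dist_map x x'
    exact (hψ.trans hfull (graphGrowth_mono hbG _ _)).trans hφ (graphGrowth_mono hbH _ _)
  · refine .of_le_mul (graphGrowth_mono hbH _ _) 1 fun n => ?_
    simp only [graphGrowth_singleton, one_mul]
    exact ncard_le_ncard (fun y hy => ⟨mem_univ y, hy.2.trans (by omega)⟩)
      ((hbH _ _).1.subset fun y hy => hy.2)

end IsNatQuasiIsometry

section Firefighter

variable {V : Type*} {G : SimpleGraph V}

lemma protectedUpTo_mono (W : ℕ → Set V) : Monotone (protectedUpTo W) :=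
  fun _ _ hmn => biUnion_subset_biUnion_left fun _ hi =>
    Finset.Icc_subset_Icc_right hmn hi

lemma fireSet_mono_s16 (r : ℕ) (W : ℕ → Set V) (X0 : Set V) : Monotone (fireSet G r W X0) :=
  monotone_nat_of_le_succ fun n v hv =>
    ⟨v, hv, .nil, Nat.zero_le r, fun x hx => by
      rw [SimpleGraph.Walk.support_nil, List.mem_singleton] at hx
      exact fun h => h.2 (hx ▸ hv)⟩

lemma mem_fireSet_add_length_of_walk {W : ℕ → Set V} {X0 : Set V} {u v : V} (p : G.Walk u v) {t : ℕ}
    (hu : u ∈ fireSet G 1 W X0 t) (hp : ∀ x ∈ p.support, x ∉ protectedUpTo W (t + p.length)) :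
    v ∈ fireSet G 1 W X0 (t + p.length) := by
  induction p generalizing t with
  | nil => exact hu
  | @cons a b _ hab q ih =>
    have hb : b ∈ fireSet G 1 W X0 (t + 1) := by
      refine ⟨a, hu, .cons hab .nil, le_rfl, fun x hx hprot => ?_⟩
      simp only [SimpleGraph.Walk.support_cons, SimpleGraph.Walk.support_nil,
        List.mem_cons, List.not_mem_nil, or_false] at hx
      rcases hx with rfl | rfl
      · exact hprot.2 hu
      · refine hp x (by simp) (protectedUpTo_mono W ?_ hprot.1)
        simp only [SimpleGraph.Walk.length_cons]
        omega
    have := ih hb fun x hx => by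
      simpa [Nat.add_assoc, Nat.add_comm 1] using hp x (List.mem_cons_of_mem _ hx)
    simpa [SimpleGraph.Walk.length_cons, Nat.add_assoc, Nat.add_comm 1] using this

end Firefighter

section Transfer

variable {V V' : Type*} {H : SimpleGraph V'}

def transferStrategy (H : SimpleGraph V') (φ : V → V') (L R : ℕ) (W : ℕ → Set V) (n : ℕ) :
    Set V' :=
  ⋃ k ∈ Ioc (L * (n - 1)) (L * n), ⋃ w ∈ W k, {y | H.dist (φ w) y ≤ R}

lemma mem_protectedUpTo_transferStrategy {φ : V → V'} {L R : ℕ} (hL : 0 < L) {W : ℕ → Set V}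
    {n : ℕ} {x : V} (hx : x ∈ protectedUpTo W (L * n)) {y : V'} (hy : H.dist (φ x) y ≤ R) :
    y ∈ protectedUpTo (transferStrategy H φ L R W) n := by
  simp only [protectedUpTo, mem_iUnion, Finset.mem_Icc, exists_prop] at hx ⊢
  obtain ⟨k, ⟨hk1, hkn⟩, hxk⟩ := hx
  -- `k` lies in the block of index `(k - 1) / L + 1`.
  have hlow : L * ((k - 1) / L) ≤ k - 1 := Nat.mul_div_le _ _
  have hhigh : k - 1 < L * ((k - 1) / L) + L := mul_add_one L _ ▸ Nat.lt_mul_div_succ _ hL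
  have hblock : (k - 1) / L < n := Nat.lt_of_mul_lt_mul_left (hlow.trans_lt (by omega))
  refine ⟨(k - 1) / L + 1, ⟨Nat.le_add_left _ _, hblock⟩, ?_⟩
  simp only [transferStrategy, Nat.add_sub_cancel, mul_add_one, mem_iUnion, mem_Ioc, exists_prop]
  exact ⟨k, ⟨by omega, by omega⟩, x, hxk, hy⟩

lemma IsStrategyBound.transferStrategy {W : ℕ → Set V} {K d : ℕ}
    (hW : IsStrategyBound (fun n => K * n ^ d) W) {b : ℕ → ℕ} (hb : HasUniformBallBound H b)
    (φ : V → V') (L R : ℕ) :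
    IsStrategyBound (fun n => K * L ^ (d + 1) * b R * n ^ d) (transferStrategy H φ L R W) := by
  intro n hn
  have hk : ∀ k ∈ Ioc (L * (n - 1)) (L * n), (⋃ w ∈ W k, {y | H.dist (φ w) y ≤ R}).Finite ∧
      (⋃ w ∈ W k, {y | H.dist (φ w) y ≤ R}).ncard ≤ K * (L * n) ^ d * b R := by
    intro k ⟨hk1, hkn⟩
    obtain ⟨hWfin, hWcard⟩ := hW k (by omega)
    refine ⟨hWfin.biUnion fun w _ => (hb _ _).1,
      (ncard_biUnion_le_mul hWfin fun w _ => (hb _ _).2).trans ?_⟩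
    dsimp only at hWcard
    grw [hWcard, hkn]
  refine ⟨(finite_Ioc _ _).biUnion fun k hk' => (hk k hk').1,
    (ncard_biUnion_le_mul (finite_Ioc _ _) fun k hk' => (hk k hk').2).trans ?_⟩
  have hblock : L * n - L * (n - 1) = L := by
    obtain ⟨m, rfl⟩ : ∃ m, n = m + 1 := ⟨n - 1, by omega⟩
    simp [Nat.mul_succ]
  rw [ncard_Ioc_nat, hblock]
  exact le_of_eq (by ring)

end Transfer

namespace IsNatQuasiIsometry

variable {V V' : Type*} {G : SimpleGraph V} {H : SimpleGraph V'} {φ : V → V'} {ψ : V' → V}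
  {C P L R : ℕ}

lemma mem_fireSet_of_mem_fireSet_transferStrategy (q : IsNatQuasiIsometry G H φ ψ C)
    (hG : G.Connected) (hH : H.Connected) (hL : 2 * C ^ 2 + 2 * C + P < L)
    (hR : C * L + 2 * C + 1 ≤ R) (W : ℕ → Set V) (Y0 : Set V') (n : ℕ) {y : V'}
    (hy : y ∈ fireSet H 1 (transferStrategy H φ L R W) Y0 n) {z : V}
    (hz : G.dist (ψ y) z ≤ P) :
    z ∈ fireSet G 1 W (⋃ y ∈ Y0, {z | G.dist (ψ y) z ≤ P}) (L * n) := by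
  induction n generalizing y z with
  | zero => exact mem_biUnion hy hz
  | succ n ih =>
    obtain ⟨u, hu, p, hp, hpy⟩ := hy
    by_cases hyn : y ∈ fireSet H 1 (transferStrategy H φ L R W) Y0 n
    · exact fireSet_mono_s16 _ _ _ (Nat.mul_le_mul_left L n.le_succ) (ih hyn hz)
    have hyW : y ∉ protectedUpTo (transferStrategy H φ L R W) (n + 1) :=
      fun h => hpy y p.end_mem_support ⟨h, hyn⟩
    have huy : H.dist u y ≤ 1 := (SimpleGraph.dist_le p).trans hp
    have huz : G.dist (ψ u) z ≤ L :=
      calc G.dist (ψ u) z ≤ G.dist (ψ u) (ψ y) + G.dist (ψ y) z := hG.dist_triangle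
        _ ≤ C * 1 + (2 * C ^ 2 + C) + P := by grw [q.dist_inv_le hH, huy, hz]
        _ ≤ L := by linarith
    -- A geodesic from `ψ u` to `z` stays so close to `y` that the transferred strategy would
    -- have protected `y` had any of its vertices been protected in time.
    obtain ⟨p', hp'⟩ := hG.exists_walk_length_eq_dist (ψ u) z
    have hsafe : ∀ x ∈ p'.support, x ∉ protectedUpTo W (L * n + p'.length) := by
      intro x hx hxW
      refine hyW (mem_protectedUpTo_transferStrategy (by omega)
        (protectedUpTo_mono W (by rw [mul_add_one]; omega) hxW) ?_)
      have hux : G.dist (ψ u) x ≤ L := (p'.dist_le_of_mem_support hx).trans (hp' ▸ huz)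
      have hxu : H.dist (φ x) (φ (ψ u)) ≤ C * L + C := by
        rw [H.dist_comm]
        grw [q.dist_map_le, hux]
      calc H.dist (φ x) y ≤ H.dist (φ x) (φ (ψ u)) + (H.dist (φ (ψ u)) u + H.dist u y) :=
            hH.dist_triangle.trans (Nat.add_le_add_left hH.dist_triangle _)
        _ ≤ (C * L + C) + (C + 1) := by grw [hxu, q.dist_map_inv_le u, huy]
        _ ≤ R := by omega
    exact fireSet_mono_s16 _ _ _ (by rw [mul_add_one]; omega)
      (mem_fireSet_add_length_of_walk p' (ih hu (by simp)) hsafe)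

lemma mapsTo_compl_burnedSet (q : IsNatQuasiIsometry G H φ ψ C) (hG : G.Connected)
    (hH : H.Connected) (hP : C ^ 2 + C ≤ P) (hL : 2 * C ^ 2 + 2 * C + P < L)
    (hR : C * L + 2 * C + 1 ≤ R) (W : ℕ → Set V) (Y0 : Set V') :
    MapsTo φ (burnedSet G 1 W (⋃ y ∈ Y0, {z | G.dist (ψ y) z ≤ P}))ᶜ
      (burnedSet H 1 (transferStrategy H φ L R W) Y0)ᶜ := by
  intro x hx hφx
  obtain ⟨n, hn⟩ := mem_iUnion.mp hφx
  exact hx (mem_iUnion.mpr ⟨L * n, q.mem_fireSet_of_mem_fireSet_transferStrategy hG hH hL hR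
    W Y0 n hn ((q.dist_inv_map_le x).trans hP)⟩)

end IsNatQuasiIsometry

theorem stmt16 {V V' : Type*} (G : SimpleGraph V) (H : SimpleGraph V')
    (hG : G.Connected) (hH : H.Connected)
    (hGu : UnifLocFinite G) (hHu : UnifLocFinite H)
    (hqi : ∃ (c : ℝ) (φ : V → V'), GraphQI c G H φ)
    (d : ℕ) (h : PolyRetaining G d) : PolyRetaining H d := by
  obtain ⟨c, φ, hφ⟩ := hqi
  obtain ⟨ψ, C, q⟩ := hφ.exists_isNatQuasiIsometry
  obtain ⟨M, hM⟩ := hGu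
  obtain ⟨M', hM'⟩ := hHu
  have hbG := hG.hasUniformBallBound hM
  have hbH := hH.hasUniformBallBound hM'
  obtain ⟨K, hK, hret⟩ := h
  set P := C ^ 2 + C
  set L := 3 * C ^ 2 + 3 * C + 1
  set R := C * L + 2 * C + 1
  refine ⟨K * L ^ (d + 1) * (M' + 1) ^ R, by positivity, fun Y0 hY0 => ?_⟩
  obtain ⟨W, hW, hWU⟩ := hret _ (hY0.biUnion fun y _ => (hbG (ψ y) P).1)
  exact ⟨transferStrategy H φ L R W, hW.transferStrategy hbH φ L R,
    q.growthEqFull_of_mapsTo hH hbG hbH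
      (q.mapsTo_compl_burnedSet hG hH le_rfl (by simp only [L]; omega) le_rfl W Y0) hWU⟩
end
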